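/- For positive semidefinite Hermitian matrices and a rank-one matrix W = w w^H with w ∈ ℂ^n, a Hermitian positive definite matrix Q ∈ ℂ^{m×m}, a matrix G ∈ ℂ^{n×m}, and α > 0, the inequality log₂ det(I + Q^{-1} G^H W G) ≤ log₂(1 + α) holds if and only if G^H W G ⪯ α Q (in the Loewner order). -/

import Mathlib

/-!
With `u = Gᴴ w` we have `Gᴴ W G = u uᴴ`, so by the matrix determinant lemma the determinant
equals `1 + uᴴ Q⁻¹ u`, and the rate bound says `uᴴ Q⁻¹ u ≤ α`. Both this and `u uᴴ ⪯ α Q`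
are equivalent to positive semidefiniteness of the bordered matrix `[[Q, u], [uᴴ, α]]`:
take the Schur complement of `Q`, respectively of the `1 × 1` block `α`.
-/

open Matrix ComplexOrder

namespace Matrix

section PosSemidef

variable {𝕜 : Type*} [RCLike 𝕜] {ι : Type*} [Fintype ι] [DecidableEq ι]

omit [Fintype ι] [DecidableEq ι] in
theorem posSemidef_smul_iff {A : Matrix ι ι 𝕜} {c : 𝕜} (hc : 0 < c) :
    (c • A).PosSemidef ↔ A.PosSemidef := by
  refine ⟨fun h => ?_, fun h => h.smul hc.le⟩
  simpa [smul_smul, inv_mul_cancel₀ hc.ne'] using h.smul (inv_pos.mpr hc).le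

theorem posSemidef_fromBlocks_replicateCol_iff_le {Q : Matrix ι ι 𝕜} (hQ : Q.PosDef)
    (u : ι → 𝕜) (a : 𝕜) :
    (fromBlocks Q (replicateCol Unit u) (replicateCol Unit u)ᴴ
      (diagonal fun _ => a)).PosSemidef ↔
      star u ⬝ᵥ Q⁻¹ *ᵥ u ≤ a := by
  have := hQ.isUnit.invertible
  have hSchur : diagonal (fun _ => a) - (replicateCol Unit u)ᴴ * Q⁻¹ * replicateCol Unit u =
      diagonal fun _ => a - star u ⬝ᵥ Q⁻¹ *ᵥ u := by
    ext ⟨⟩ ⟨⟩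
    simp only [conjTranspose_replicateCol, sub_apply, diagonal_apply_eq, dotProduct_mulVec]
    rfl
  rw [PosDef.fromBlocks₁₁ _ _ hQ, hSchur, posSemidef_diagonal_iff]
  simp

omit [DecidableEq ι] in
theorem posSemidef_fromBlocks_replicateCol_iff {Q : Matrix ι ι 𝕜} (u : ι → 𝕜) {a : 𝕜}
    (ha : 0 < a) :
    (fromBlocks Q (replicateCol Unit u) (replicateCol Unit u)ᴴ
      (diagonal fun _ => a)).PosSemidef ↔
      (a • Q - vecMulVec u (star u)).PosSemidef := by
  have hD : (diagonal fun _ : Unit => a).PosDef := PosDef.diagonal fun _ => ha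
  have := hD.isUnit.invertible
  have hDinv : (diagonal fun _ : Unit => a)⁻¹ = diagonal fun _ => a⁻¹ :=
    inv_eq_left_inv <| by simp [inv_mul_cancel₀ ha.ne']
  have hSchur : replicateCol Unit u * (diagonal fun _ : Unit => a)⁻¹ * (replicateCol Unit u)ᴴ =
      a⁻¹ • vecMulVec u (star u) := by
    rw [hDinv, ← smul_one_eq_diagonal, Matrix.mul_smul, Matrix.mul_one, Matrix.smul_mul,
      conjTranspose_replicateCol, vecMulVec_eq Unit]
  rw [PosDef.fromBlocks₂₂ _ _ hD, hSchur, ← posSemidef_smul_iff ha, smul_sub, smul_smul,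
    mul_inv_cancel₀ ha.ne', one_smul]

theorem posSemidef_smul_sub_vecMulVec_iff {Q : Matrix ι ι 𝕜} (hQ : Q.PosDef) (u : ι → 𝕜)
    {a : 𝕜} (ha : 0 < a) :
    (a • Q - vecMulVec u (star u)).PosSemidef ↔ star u ⬝ᵥ Q⁻¹ *ᵥ u ≤ a := by
  rw [← posSemidef_fromBlocks_replicateCol_iff u ha, posSemidef_fromBlocks_replicateCol_iff_le hQ]

end PosSemidef

section RankOne

variable {R : Type*} [CommRing R] {l m n : Type*} [Fintype m] [Fintype n] [DecidableEq n]

omit [DecidableEq n] in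
theorem mul_vecMulVec_mul (A : Matrix l m R) (x : m → R) (y : n → R) (B : Matrix n l R) :
    A * vecMulVec x y * B = vecMulVec (A *ᵥ x) (y ᵥ* B) := by
  rw [mul_vecMulVec, vecMulVec_mul]

theorem det_one_add_mul_vecMulVec (A : Matrix n n R) (x y : n → R) :
    (1 + A * vecMulVec x y).det = 1 + y ⬝ᵥ A *ᵥ x := by
  rw [mul_vecMulVec, vecMulVec_eq Unit, det_one_add_replicateCol_mul_replicateRow]

end RankOne

end Matrix

theorem stmt0 {n m : ℕ} (w : Fin n → ℂ) (G : Matrix (Fin n) (Fin m) ℂ)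
    (Q : Matrix (Fin m) (Fin m) ℂ) (hQ : Q.PosDef) (α : ℝ) (hα : 0 < α)
    (W : Matrix (Fin n) (Fin n) ℂ) (hW : W = vecMulVec w (star w)) :
    Real.logb 2 ((1 + Q⁻¹ * (Gᴴ * W * G)).det.re) ≤ Real.logb 2 (1 + α) ↔
      ((α : ℂ) • Q - Gᴴ * W * G).PosSemidef := by
  have hGWG : Gᴴ * W * G = vecMulVec (Gᴴ *ᵥ w) (star (Gᴴ *ᵥ w)) := by
    rw [hW, mul_vecMulVec_mul, star_mulVec, conjTranspose_conjTranspose]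
  set u := Gᴴ *ᵥ w
  have hT : 0 ≤ star u ⬝ᵥ Q⁻¹ *ᵥ u := hQ.inv.posSemidef.dotProduct_mulVec_nonneg u
  have hT_real := Complex.eq_re_of_ofReal_le hT
  rw [hT_real, Complex.zero_le_real] at hT
  rw [hGWG, det_one_add_mul_vecMulVec,
    posSemidef_smul_sub_vecMulVec_iff hQ u (Complex.zero_lt_real.mpr hα), hT_real,
    Complex.real_le_real]
  simp only [Complex.add_re, Complex.one_re, Complex.ofReal_re]
  exact (Real.logb_le_logb one_lt_two (by positivity) (by positivity)).trans
    (add_le_add_iff_left 1)
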